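/- Let G be a finite simple graph on vertices v_1,…,v_n. Then G is a threshold graph (there exist a real number t and a weight function w on the vertices such that distinct vertices u and v are adjacent if and only if w(u) + w(v) ≥ t) if and only if G is the only simple graph on its vertex set in which each vertex has its given degree, i.e., every simple graph H on the same vertex set with deg_H(v_i) = deg_G(v_i) for all i satisfies H = G. -/

import Mathlib

/-!
A 2-switch (trading edges `ab`, `cd` for non-edges `ad`, `cb`) preserves every degree.

If `G` is threshold with weights `w` and threshold `0`, then for any graph `H` the sum of
`w u + w v` over ordered adjacent pairs of `H` is `2 ∑ w v · deg_H v`, so it is the same for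
every `H` with the degrees of `G`. Containing exactly the pairs of nonnegative weight sum, `G`
maximizes this sum, and every maximizer is a subgraph of `G`; equal degrees then force `H = G`.

Conversely, if the degrees determine `G`, no 2-switch applies to `G`. Hence whenever `p ~ q`
and `deg p ≤ deg e`, also `e ~ q` (for `e ≠ q`): otherwise a neighbour of `e` outside `N(p)`
would give a 2-switch. So in every vertex set a vertex of maximal degree is dominating, or else
one of its non-neighbours is isolated, and the weights are built by adding such vertices one at
a time.
-/

/-- The degree of a vertex: the number of its neighbors. -/
noncomputable def deg {V : Type*} (G : SimpleGraph V) (v : V) : ℕ :=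
  (G.neighborSet v).ncard

/-- A graph is a threshold graph if there are a real threshold `t` and real vertex
weights such that two distinct vertices are adjacent iff the sum of their weights
is at least `t`. -/
def IsThreshold {V : Type*} (G : SimpleGraph V) : Prop :=
  ∃ (t : ℝ) (w : V → ℝ), ∀ u v : V, u ≠ v → (G.Adj u v ↔ t ≤ w u + w v)

open Finset

namespace SimpleGraph

variable {V : Type*} {G H : SimpleGraph V}

lemma deg_eq_card_filter [Fintype V] [DecidableRel G.Adj] (u : V) :
    deg G u = #{v | G.Adj u v} := by
  rw [deg, ← Set.ncard_coe_finset]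
  congr 1
  ext v
  simp

lemma sum_ite_adj_add [Fintype V] [DecidableRel G.Adj] {R : Type*} [CommSemiring R] (g : V → R) :
    ∑ u, ∑ v, (if G.Adj u v then g u + g v else 0) = 2 * ∑ u, g u * deg G u := by
  have hrow : ∀ u, ∑ v, (if G.Adj u v then g u else 0) = g u * deg G u := by
    intro u
    rw [← sum_filter, sum_const, deg_eq_card_filter, nsmul_eq_mul, mul_comm]
  have hcol : ∑ u, ∑ v, (if G.Adj u v then g v else 0) =
      ∑ u, ∑ v, (if G.Adj u v then g u else 0) := by
    rw [sum_comm]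
    simp only [adj_comm]
  simp only [ite_add_zero, sum_add_distrib, hcol, hrow]
  ring

lemma eq_of_le_of_deg_eq [Finite V] (hle : H ≤ G) (hdeg : ∀ v, deg H v = deg G v) : H = G := by
  ext u v
  have : H.neighborSet u = G.neighborSet u :=
    Set.eq_of_subset_of_ncard_le (fun _ h => hle h) (hdeg u).ge
  exact Set.ext_iff.mp this v

lemma deg_eq_of_adj_iff_perm (σ : V → Equiv.Perm V) (h : ∀ x y, H.Adj x y ↔ G.Adj x (σ x y))
    (x : V) : deg H x = deg G x := by
  have : H.neighborSet x = σ x ⁻¹' G.neighborSet x := by ext y; exact h x y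
  rw [deg, deg, this, ← Equiv.image_symm_eq_preimage]
  exact Set.ncard_image_of_injective _ (σ x).symm.injective

lemma ncard_neighborSet_sdiff_le [Finite V] {u v : V} (h : deg G u ≤ deg G v) :
    (G.neighborSet u \ {v}).ncard ≤ (G.neighborSet v \ {u}).ncard := by
  by_cases huv : G.Adj u v
  · rw [Set.ncard_sdiff_singleton_of_mem (show v ∈ G.neighborSet u from huv),
      Set.ncard_sdiff_singleton_of_mem (show u ∈ G.neighborSet v from huv.symm)]
    exact Nat.sub_le_sub_right h 1
  · rw [Set.sdiff_singleton_eq_self (show v ∉ G.neighborSet u from huv),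
      Set.sdiff_singleton_eq_self (show u ∉ G.neighborSet v from mt Adj.symm huv)]
    exact h

def IsDeterminedByDegrees (G : SimpleGraph V) : Prop :=
  ∀ H : SimpleGraph V, (∀ v, deg H v = deg G v) → H = G

theorem _root_.isThreshold_iff_threshold_zero :
    IsThreshold G ↔ ∃ w : V → ℝ, ∀ u v, u ≠ v → (G.Adj u v ↔ 0 ≤ w u + w v) := by
  refine ⟨fun ⟨t, w, hw⟩ => ⟨fun v => w v - t / 2, fun u v huv => ?_⟩, fun ⟨w, hw⟩ => ⟨0, w, hw⟩⟩
  rw [hw u v huv]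
  constructor <;> intro <;> linarith

theorem _root_.IsThreshold.isDeterminedByDegrees [Fintype V]
    (hG : IsThreshold G) : G.IsDeterminedByDegrees := by
  classical
  intro H hdeg
  obtain ⟨w, hw⟩ := isThreshold_iff_threshold_zero.mp hG
  let f : V → V → ℝ := fun u v =>
    (if G.Adj u v then w u + w v else 0) - (if H.Adj u v then w u + w v else 0)
  have hf_nonneg : ∀ u v, 0 ≤ f u v := by
    intro u v
    by_cases huv : u = v
    · simp [f, huv]
    have := hw u v huv
    simp only [f]
    split_ifs <;> grind
  have hf_sum : ∑ u, ∑ v, f u v = 0 := by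
    simp only [f, sum_sub_distrib, sum_ite_adj_add, hdeg, sub_self]
  refine eq_of_le_of_deg_eq (fun u v hHuv => ?_) hdeg
  by_contra hGuv
  have hpos : 0 < f u v := by
    have := (hw u v hHuv.ne).not.mp hGuv
    simp only [f, if_pos hHuv, if_neg hGuv]
    linarith
  have : f u v ≤ ∑ u, ∑ v, f u v :=
    (single_le_sum (fun v _ => hf_nonneg u v) (mem_univ v)).trans
      (single_le_sum (fun u _ => sum_nonneg fun v _ => hf_nonneg u v) (mem_univ u))
  linarith

def twoSwitch (G : SimpleGraph V) (a b c d : V) : SimpleGraph V :=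
  fromEdgeSet (G.edgeSet \ {s(a, b), s(c, d)} ∪ {s(a, d), s(c, b)})

-- Each vertex sees its old neighbourhood through a transposition, so degrees are preserved.
lemma twoSwitch_adj_iff [DecidableEq V] {a b c d : V} (hab : G.Adj a b) (hcd : G.Adj c d)
    (had : ¬G.Adj a d) (hcb : ¬G.Adj c b) (had' : a ≠ d) (hcb' : c ≠ b) (x y : V) :
    (G.twoSwitch a b c d).Adj x y ↔ G.Adj x
      ((if x = a ∨ x = c then Equiv.swap b d
        else if x = b ∨ x = d then Equiv.swap a c else 1) y) := by
  simp only [twoSwitch, fromEdgeSet_adj, Set.mem_union, Set.mem_sdiff, mem_edgeSet,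
    Set.mem_insert_iff, Set.mem_singleton_iff, Sym2.eq_iff]
  split_ifs <;> grind [Equiv.Perm.one_apply, Adj.ne, adj_symm]

lemma IsDeterminedByDegrees.adj_or_adj (hG : G.IsDeterminedByDegrees) {a b c d : V}
    (hab : G.Adj a b) (hcd : G.Adj c d) (had : a ≠ d) (hcb : c ≠ b) : G.Adj a d ∨ G.Adj c b := by
  classical
  by_contra! h
  have hsw := twoSwitch_adj_iff hab hcd h.1 h.2 had hcb
  rw [hG _ (deg_eq_of_adj_iff_perm _ hsw)] at hsw
  exact h.1 ((hsw a d).mpr (by simpa using hab))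

lemma IsDeterminedByDegrees.adj_of_deg_le [Finite V] (hG : G.IsDeterminedByDegrees) {p q e : V}
    (hpq : G.Adj p q) (hdeg : deg G p ≤ deg G e) (hne : e ≠ q) : G.Adj e q := by
  by_contra heq
  obtain ⟨y, hey, hyp, hpy⟩ : ∃ y, G.Adj e y ∧ y ≠ p ∧ ¬G.Adj p y := by
    by_contra! hsub
    have hlt : (G.neighborSet e \ {p}).ncard < (G.neighborSet p \ {e}).ncard :=
      Set.ncard_lt_ncard ⟨fun x ⟨hex, hxp⟩ => ⟨hsub x hex hxp, hex.ne.symm⟩,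
        fun hsup => heq (hsup ⟨hpq, hne.symm⟩).1⟩
    exact (ncard_neighborSet_sdiff_le hdeg).not_gt hlt
  exact (hG.adj_or_adj hpq hey hyp.symm hne).elim hpy heq

lemma IsDeterminedByDegrees.exists_forall_adj_or_forall_not_adj [Finite V]
    (hG : G.IsDeterminedByDegrees) {s : Finset V} (hs : s.Nonempty) :
    ∃ z ∈ s, (∀ v ∈ s, v ≠ z → G.Adj z v) ∨ ∀ v ∈ s, ¬G.Adj z v := by
  obtain ⟨z, hz, hmax⟩ := s.exists_max_image (deg G) hs
  by_cases hdom : ∀ v ∈ s, v ≠ z → G.Adj z v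
  · exact ⟨z, hz, .inl hdom⟩
  push Not at hdom
  obtain ⟨v, hv, hvz, hzv⟩ := hdom
  exact ⟨v, hv, .inr fun q hq hvq => hzv (hG.adj_of_deg_le hvq.symm (hmax q hq) hvz.symm)⟩

def IsThresholdOn (G : SimpleGraph V) (s : Finset V) : Prop :=
  ∃ w : V → ℝ, ∀ u ∈ s, ∀ v ∈ s, u ≠ v → (G.Adj u v ↔ 0 ≤ w u + w v)

lemma isThresholdOn_insert [DecidableEq V] {s : Finset V} {z : V} {w : V → ℝ} {r : ℝ}
    (hz : z ∉ s)
    (hw : ∀ u ∈ s, ∀ v ∈ s, u ≠ v → (G.Adj u v ↔ 0 ≤ w u + w v))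
    (hr : ∀ v ∈ s, G.Adj z v ↔ 0 ≤ r + w v) : G.IsThresholdOn (insert z s) := by
  refine ⟨Function.update w z r, ?_⟩
  have hupd : ∀ v ∈ s, Function.update w z r v = w v := fun v hv =>
    Function.update_of_ne (ne_of_mem_of_not_mem hv hz) _ _
  simp only [mem_insert]
  rintro u (rfl | hu) v (rfl | hv) huv
  · exact absurd rfl huv
  · rw [Function.update_self, hupd v hv]
    exact hr v hv
  · rw [Function.update_self, hupd u hu, G.adj_comm, add_comm]
    exact hr u hu
  · rw [hupd u hu, hupd v hv]
    exact hw u hu v hv huv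

theorem IsDeterminedByDegrees.isThresholdOn [Finite V] (hG : G.IsDeterminedByDegrees)
    (s : Finset V) : G.IsThresholdOn s := by
  classical
  induction s using Finset.strongInduction with
  | H s ih =>
  rcases s.eq_empty_or_nonempty with rfl | hs
  · exact ⟨0, by simp⟩
  obtain ⟨z, hz, hdom | hiso⟩ := hG.exists_forall_adj_or_forall_not_adj hs
  all_goals
    obtain ⟨w, hw⟩ := ih (s.erase z) (erase_ssubset hz)
    obtain ⟨M, hM⟩ : ∃ M, ∀ v ∈ s.erase z, |w v| ≤ M :=
      ⟨_, fun v hv => single_le_sum (f := fun u => |w u|) (fun _ _ => abs_nonneg _) hv⟩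
    rw [← insert_erase hz]
  · refine isThresholdOn_insert (r := M) (notMem_erase z s) hw fun v hv =>
      iff_of_true (hdom v (mem_of_mem_erase hv) (ne_of_mem_erase hv)) ?_
    linarith [neg_abs_le (w v), hM v hv]
  · refine isThresholdOn_insert (r := -M - 1) (notMem_erase z s) hw fun v hv =>
      iff_of_false (hiso v (mem_of_mem_erase hv)) ?_
    linarith [le_abs_self (w v), hM v hv]

theorem IsDeterminedByDegrees.isThreshold [Fintype V]
    (hG : G.IsDeterminedByDegrees) : IsThreshold G := by
  obtain ⟨w, hw⟩ := hG.isThresholdOn univ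
  exact isThreshold_iff_threshold_zero.mpr ⟨w, fun u v => hw u (mem_univ u) v (mem_univ v)⟩

end SimpleGraph

/-- A finite simple graph is a threshold graph iff it is the only simple graph on
its vertex set in which each vertex has its given degree. -/
theorem stmt19 {V : Type*} [Fintype V] (G : SimpleGraph V) :
    IsThreshold G ↔
      ∀ H : SimpleGraph V, (∀ v, deg H v = deg G v) → H = G :=
  ⟨IsThreshold.isDeterminedByDegrees, SimpleGraph.IsDeterminedByDegrees.isThreshold⟩
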